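/- arXiv:1109.3305 — 3 statements merged into one kernel-verified Lean document; each statement's English description precedes it below -/
import Mathlib

section
/- Let 1=q<p<∞, λ>0, 0≤a<b≤∞ and I=(a,b), and set p'=p/(p−1). Then K(I) = (∫_I [t^{−λ}−b^{−λ}]^{p'} v^{p'}(t) dt)^{1/p'}. -/
open MeasureTheory Set ENNReal Filter

noncomputable section

/-- The term `e^{-x b^λ}`, interpreted as `0` when `b = ∞`. -/
def bexp (lam : ℝ) (b : ℝ≥0∞) (x : ℝ) : ℝ :=
  if b = ⊤ then 0 else Real.exp (-(x * b.toReal ^ lam))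

/-- The term `b^{-λ}`, interpreted as `0` when `b = ∞`. -/
def binv (lam : ℝ) (b : ℝ≥0∞) : ℝ :=
  if b = ⊤ then 0 else b.toReal ^ (-lam)

/-- The interval `(a, b) ⊆ ℝ`, where `b` may be `∞`. -/
def Iab (a : ℝ) (b : ℝ≥0∞) : Set ℝ := {y : ℝ | a < y ∧ ENNReal.ofReal y < b}

/-- The localized Laplace-type operator `L_{(a,b)}`. -/
def Lab (lam : ℝ) (v : ℝ → ℝ) (a : ℝ) (b : ℝ≥0∞) (f : ℝ → ℝ) (x : ℝ) : ℝ :=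
  ∫ y in Iab a b, f y * v y * (Real.exp (-(x * y ^ lam)) - bexp lam b x)

/-- The Laplace-type transformation `L f (x) = ∫_0^∞ e^{-x y^λ} f(y) v(y) dy`. -/
def Lap (lam : ℝ) (v : ℝ → ℝ) (f : ℝ → ℝ) (x : ℝ) : ℝ :=
  ∫ y in Ioi (0:ℝ), Real.exp (-(x * y ^ lam)) * f y * v y

/-- `K(I) = sup { ‖L_{(a,b)} f‖_{L^q(0,∞)} / ‖f‖_{L^p(a,b)} : 0 ≠ f ∈ L^p(a,b) }`. -/
def Knorm (lam : ℝ) (v : ℝ → ℝ) (p q : ℝ) (a : ℝ) (b : ℝ≥0∞) : ℝ≥0∞ :=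
  ⨆ f : {f : ℝ → ℝ // MemLp f (ENNReal.ofReal p) (volume.restrict (Iab a b)) ∧
      eLpNorm f (ENNReal.ofReal p) (volume.restrict (Iab a b)) ≠ 0},
    eLpNorm (Lab lam v a b f.1) (ENNReal.ofReal q) (volume.restrict (Ioi 0)) /
      eLpNorm f.1 (ENNReal.ofReal p) (volume.restrict (Iab a b))

/-- The (quasi-)norm of an operator `T : L^p(0,∞) → L^q(0,∞)`. -/
def opNorm (p q : ℝ) (T : (ℝ → ℝ) → ℝ → ℝ) : ℝ≥0∞ :=
  ⨆ f : {f : ℝ → ℝ // MemLp f (ENNReal.ofReal p) (volume.restrict (Ioi 0)) ∧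
      eLpNorm f (ENNReal.ofReal p) (volume.restrict (Ioi 0)) ≠ 0},
    eLpNorm (T f.1) (ENNReal.ofReal q) (volume.restrict (Ioi 0)) /
      eLpNorm f.1 (ENNReal.ofReal p) (volume.restrict (Ioi 0))

/-- The `n`-th approximation number of `T : L^p(0,∞) → L^q(0,∞)`:
the infimum of `‖T - K‖` over bounded linear `K` of rank `< n`. -/
def approxNum (n : ℕ) (p q : ℝ) (T : (ℝ → ℝ) → ℝ → ℝ) : ℝ≥0∞ :=
  ⨅ K : {K : (ℝ → ℝ) →ₗ[ℝ] (ℝ → ℝ) //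
      Module.rank ℝ ↥(LinearMap.range K) < (n : Cardinal) ∧
      opNorm p q (fun f => K f) < ⊤},
    opNorm p q (fun f x => T f x - K.1 f x)

/-- Compactness of the Laplace-type transformation `L : L^p(0,∞) → L^q(0,∞)`,
expressed as total boundedness of the image of the unit ball. -/
def LapCompact (lam : ℝ) (v : ℝ → ℝ) (p q : ℝ) : Prop :=
  ∀ ε : ℝ≥0∞, 0 < ε → ∃ S : Finset (ℝ → ℝ), ∀ f : ℝ → ℝ,
    MemLp f (ENNReal.ofReal p) (volume.restrict (Ioi 0)) →
    eLpNorm f (ENNReal.ofReal p) (volume.restrict (Ioi 0)) ≤ 1 →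
    ∃ g ∈ S, eLpNorm (fun x => Lap lam v f x - g x) (ENNReal.ofReal q)
      (volume.restrict (Ioi 0)) ≤ ε

/-- The dyadic interval `Δ_k = [2^{k-1}, 2^k]`. -/
def dyad (k : ℤ) : Set ℝ := Icc ((2:ℝ) ^ (k-1)) ((2:ℝ) ^ k)

/-- `σ_k(δ)`. -/
def sigmaK (lam p' q δ : ℝ) (v : ℝ → ℝ) (k : ℤ) : ℝ≥0∞ :=
  (∫⁻ x in Ioi (0:ℝ), ENNReal.ofReal
      (Real.exp (-(x * (2:ℝ) ^ ((k:ℝ) * lam))) -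
        Real.exp (-(x * (2:ℝ) ^ (((k:ℝ) + 1) * lam)))) ^ δ) ^ (1/q) *
  (∫⁻ y in dyad k, ENNReal.ofReal (v y) ^ p') ^ (1/p')

/-- `Λ_s(δ) = (Σ_{k∈ℤ} σ_k(δ)^s)^{1/s}`. -/
def LamS (lam p' q δ s : ℝ) (v : ℝ → ℝ) : ℝ≥0∞ :=
  (∑' k : ℤ, sigmaK lam p' q δ v k ^ s) ^ (1/s)

/-- `J_s`. -/
def Js (lam p' q s : ℝ) (v : ℝ → ℝ) : ℝ≥0∞ :=
  (∫⁻ t in Ioi (0:ℝ), ENNReal.ofReal t ^ (-(lam * s / q)) *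
    (∫⁻ y in Ioo 0 t, ENNReal.ofReal (v y) ^ p') ^ (s/p' - 1) *
    ENNReal.ofReal (v t) ^ p') ^ (1/s)

/-- `esssup_{a<y<t} v(y)` (with values in `ℝ≥0∞`). -/
def vsup (v : ℝ → ℝ) (a t : ℝ) : ℝ≥0∞ :=
  essSup (fun y => ENNReal.ofReal (v y)) (volume.restrict (Ioo a t))

/-- `J̄_u = (∫_0^∞ (esssup_{0<y<t} v(y))^u t^{-λu/q-1} dt)^{1/u}`. -/
def JsBar (lam q u : ℝ) (v : ℝ → ℝ) : ℝ≥0∞ :=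
  (∫⁻ t in Ioi (0:ℝ), vsup v 0 t ^ u * ENNReal.ofReal t ^ (-(lam * u / q) - 1)) ^ (1/u)

/-- `v_ε(t) = lim_{ε→0⁺} ‖v‖_{L^∞(t-ε,t+ε)}` (the limit of the non-increasing family
being its infimum). -/
def vEps (v : ℝ → ℝ) (t : ℝ) : ℝ≥0∞ :=
  ⨅ (e : ℝ) (_ : 0 < e),
    essSup (fun y => ENNReal.ofReal (v y)) (volume.restrict (Ioo (t - e) (t + e)))

/-!
The kernel `e^{-x y^λ} - e^{-x b^λ}` is nonnegative for `y ∈ I` and integrates over `x ∈ (0,∞)`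
to `w(y) = y^{-λ} - b^{-λ}`. By Tonelli, `‖L f‖₁ ≤ ∫_I |f| v w`, with equality when `f ≥ 0`, so
`K(I)` is the norm on `L^p(I)` of the functional `f ↦ ∫_I f v w`, that is `‖v w‖_{p'}`: Hölder
gives `≤`, and `≥` comes from testing on `f = W_n^{p'-1}`, where `W_n ↑ v w` are truncations that
are bounded and supported in compact subintervals of `I`, so that `L f` is a convergent integral.
-/

open Topology

/-- Converse of Hölder's inequality, tested on an increasing approximation `u n ↑ W`
by functions of finite `L^q` norm. -/
theorem lintegral_rpow_one_div_le_of_dual_bound {α : Type*} [MeasurableSpace α]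
    {μ : Measure α} {p q : ℝ} (hpq : p.HolderConjugate q)
    {W : α → ℝ≥0∞} {u : ℕ → α → ℝ≥0∞} (hu : ∀ n, AEMeasurable (u n) μ) (hmono : Monotone u)
    (hlim : ∀ᵐ x ∂μ, Tendsto (u · x) atTop (𝓝 (W x)))
    (hfin : ∀ n, ∫⁻ x, u n x ^ q ∂μ ≠ ∞) {C : ℝ≥0∞}
    (hC : ∀ n, ∫⁻ x, u n x ^ q ∂μ ≠ 0 →
      ∫⁻ x, u n x ^ (q - 1) * W x ∂μ ≤ C * (∫⁻ x, u n x ^ q ∂μ) ^ (1 / p)) :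
    (∫⁻ x, W x ^ q ∂μ) ^ (1 / q) ≤ C := by
  have hq := hpq.symm
  have hS : ∀ n, (∫⁻ x, u n x ^ q ∂μ) ^ (1 / q) ≤ C := by
    intro n
    set S := ∫⁻ x, u n x ^ q ∂μ
    rcases eq_or_ne S 0 with h0 | h0
    · rw [h0, ENNReal.zero_rpow_of_pos hq.one_div_pos]
      exact zero_le
    have hle : S ≤ ∫⁻ x, u n x ^ (q - 1) * W x ∂μ := by
      refine lintegral_mono_ae ?_
      filter_upwards [hlim] with x hx
      calc u n x ^ q = u n x ^ (q - 1) * u n x ^ (1 : ℝ) := by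
            rw [← ENNReal.rpow_add_of_nonneg _ _ hq.sub_one_pos.le zero_le_one, sub_add_cancel]
        _ ≤ u n x ^ (q - 1) * W x := by
            rw [ENNReal.rpow_one]
            exact mul_le_mul_right (Monotone.ge_of_tendsto (fun _ _ h => hmono h x) hx n) _
    have hsplit : S = S ^ (1 / p) * S ^ (1 / q) := by
      rw [← ENNReal.rpow_add _ _ h0 (hfin n), one_div, one_div, hpq.inv_add_inv_eq_one,
        ENNReal.rpow_one]
    have hSp0 : S ^ (1 / p) ≠ 0 := by simp [h0, hpq.pos.le]
    have hSp : S ^ (1 / p) ≠ ∞ := rpow_ne_top_of_nonneg hpq.one_div_nonneg (hfin n)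
    rw [← ENNReal.mul_le_mul_iff_right hSp0 hSp, ← hsplit, mul_comm]
    exact hle.trans (hC n h0)
  have hconv : Tendsto (fun n => ∫⁻ x, u n x ^ q ∂μ) atTop (𝓝 (∫⁻ x, W x ^ q ∂μ)) :=
    lintegral_tendsto_of_tendsto_of_monotone (fun n => (hu n).pow_const q)
      (ae_of_all _ fun x n m hnm => ENNReal.rpow_le_rpow (hmono hnm x) hq.nonneg)
      (hlim.mono fun x hx => (ENNReal.continuous_rpow_const.tendsto _).comp hx)
  exact le_of_tendsto' ((ENNReal.continuous_rpow_const.tendsto _).comp hconv) hS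

section Truncation

variable {α : Type*} {s : ℕ → Set α} {W : α → ℝ≥0∞}

def truncation (s : ℕ → Set α) (W : α → ℝ≥0∞) (n : ℕ) : α → ℝ≥0∞ :=
  (s n).indicator fun x => min (W x) n

theorem truncation_le (n : ℕ) (x : α) : truncation s W n x ≤ n := by
  unfold truncation
  by_cases hx : x ∈ s n <;> simp [hx]

theorem truncation_ne_top (n : ℕ) (x : α) : truncation s W n x ≠ ∞ :=
  ((truncation_le n x).trans_lt (natCast_lt_top n)).ne

theorem truncation_eq_zero_of_notMem {n : ℕ} {x : α} (hx : x ∉ s n) :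
    truncation s W n x = 0 :=
  indicator_of_notMem hx _

theorem monotone_truncation (hs : Monotone s) : Monotone (truncation s W) := by
  intro n m hnm x
  unfold truncation
  by_cases hx : x ∈ s n
  · rw [indicator_of_mem hx, indicator_of_mem (hs hnm hx)]
    gcongr
  · simp [hx]

theorem tendsto_truncation (hs : Monotone s) {x : α} (hx : x ∈ ⋃ n, s n) :
    Tendsto (truncation s W · x) atTop (𝓝 (W x)) := by
  obtain ⟨N, hN⟩ := mem_iUnion.1 hx
  have hmin : Tendsto (fun n : ℕ => min (W x) n) atTop (𝓝 (W x)) := by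
    simpa using tendsto_const_nhds.min ENNReal.tendsto_nat_nhds_top
  refine hmin.congr' ?_
  filter_upwards [eventually_ge_atTop N] with n hn
  exact (indicator_of_mem (hs hn hN) (fun x => min (W x) n)).symm

theorem aemeasurable_truncation [MeasurableSpace α] {μ : Measure α}
    (hs : ∀ n, MeasurableSet (s n)) (hW : AEMeasurable W μ) (n : ℕ) :
    AEMeasurable (truncation s W n) μ :=
  (hW.min aemeasurable_const).indicator (hs n)

theorem lintegral_truncation_rpow_le [MeasurableSpace α] {μ : Measure α}
    (hs : ∀ n, MeasurableSet (s n)) {q : ℝ} (hq : 0 < q) (n : ℕ) : ∫⁻ x, truncation s W n x ^ q ∂μ ≤ (n : ℝ≥0∞) ^ q * μ (s n) := by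
  rw [← lintegral_indicator_const (hs n)]
  refine lintegral_mono fun x => ?_
  by_cases hx : x ∈ s n
  · rw [indicator_of_mem hx]
    exact rpow_le_rpow (truncation_le n x) hq.le
  · rw [truncation_eq_zero_of_notMem hx, zero_rpow_of_pos hq]
    exact zero_le

end Truncation

theorem eLpNorm_toReal_rpow_sub_one {α : Type*} [MeasurableSpace α] {μ : Measure α}
    {p q : ℝ} (hpq : p.HolderConjugate q) {u : α → ℝ≥0∞} (hu : ∀ x, u x ≠ ∞) :
    eLpNorm (fun x => (u x).toReal ^ (q - 1)) (ENNReal.ofReal p) μ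
      = (∫⁻ x, u x ^ q ∂μ) ^ (1 / p) := by
  rw [eLpNorm_eq_lintegral_rpow_enorm_toReal (by simpa using hpq.pos) ofReal_ne_top,
    toReal_ofReal hpq.nonneg]
  congr 1
  refine lintegral_congr fun x => ?_
  rw [Real.enorm_eq_ofReal (by positivity),
    ← ENNReal.ofReal_rpow_of_nonneg toReal_nonneg hpq.symm.sub_one_pos.le, ofReal_toReal (hu x),
    ← ENNReal.rpow_mul, hpq.symm.sub_one_mul_conj]

theorem measurableSet_Iab (a : ℝ) (b : ℝ≥0∞) : MeasurableSet (Iab a b) :=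
  measurableSet_Ioi.inter (measurable_ofReal measurableSet_Iio)

theorem Iab_subset_Ioi {a : ℝ} (ha : 0 ≤ a) (b : ℝ≥0∞) : Iab a b ⊆ Ioi 0 :=
  fun _ hy => ha.trans_lt hy.1

theorem lt_toReal_of_mem_Iab {a y : ℝ} {b : ℝ≥0∞} (ha : 0 ≤ a) (hb : b ≠ ⊤)
    (hy : y ∈ Iab a b) : y < b.toReal :=
  (ofReal_lt_iff_lt_toReal (ha.trans hy.1.le) hb).1 hy.2

def exhaustIab (a : ℝ) (b : ℝ≥0∞) (n : ℕ) : Set ℝ := Iab a b ∩ Icc (a + 1 / (n + 1)) n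

theorem measurableSet_exhaustIab (a : ℝ) (b : ℝ≥0∞) (n : ℕ) :
    MeasurableSet (exhaustIab a b n) :=
  (measurableSet_Iab a b).inter measurableSet_Icc

theorem monotone_exhaustIab (a : ℝ) (b : ℝ≥0∞) : Monotone (exhaustIab a b) := by
  intro n m hnm
  refine inter_subset_inter_right _ (Icc_subset_Icc ?_ (by exact_mod_cast hnm))
  gcongr

theorem iUnion_exhaustIab (a : ℝ) (b : ℝ≥0∞) : ⋃ n, exhaustIab a b n = Iab a b := by
  refine Subset.antisymm (iUnion_subset fun n => inter_subset_left) fun y hy => ?_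
  obtain ⟨N, hN⟩ := exists_nat_one_div_lt (sub_pos.2 hy.1)
  obtain ⟨M, hM⟩ := exists_nat_ge y
  refine mem_iUnion.2 ⟨max N M, hy, ?_, hM.trans (by exact_mod_cast le_max_right N M)⟩
  have : 1 / ((max N M : ℕ) + 1 : ℝ) ≤ 1 / (N + 1) := by
    gcongr
    exact le_max_left N M
  linarith

theorem exhaustIab_subset_Icc (a : ℝ) (b : ℝ≥0∞) (n : ℕ) :
    exhaustIab a b n ⊆ Icc (a + 1 / (n + 1)) n :=
  inter_subset_right

def lapKernel (lam : ℝ) (b : ℝ≥0∞) (x y : ℝ) : ℝ := Real.exp (-(x * y ^ lam)) - bexp lam b x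

theorem measurable_lapKernel (lam : ℝ) (b : ℝ≥0∞) :
    Measurable (Function.uncurry (lapKernel lam b)) := by
  unfold Function.uncurry lapKernel bexp
  split_ifs <;> fun_prop

theorem lapKernel_nonneg {lam a x y : ℝ} {b : ℝ≥0∞} (hlam : 0 < lam) (ha : 0 ≤ a) (hx : 0 ≤ x)
    (hy : y ∈ Iab a b) : 0 ≤ lapKernel lam b x y := by
  have hy0 : 0 < y := ha.trans_lt hy.1
  unfold lapKernel bexp
  split_ifs with hb
  · simpa using (Real.exp_pos _).le
  · have hyb := lt_toReal_of_mem_Iab ha hb hy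
    rw [sub_nonneg, Real.exp_le_exp, neg_le_neg_iff]
    gcongr

theorem lapKernel_le_one {lam x y : ℝ} (b : ℝ≥0∞) (hx : 0 ≤ x) (hy : 0 ≤ y) :
    lapKernel lam b x y ≤ 1 := by
  have hexp : Real.exp (-(x * y ^ lam)) ≤ 1 := by
    rw [Real.exp_le_one_iff, neg_nonpos]
    positivity
  have hbexp : 0 ≤ bexp lam b x := by
    unfold bexp
    split_ifs
    exacts [le_rfl, (Real.exp_pos _).le]
  unfold lapKernel
  linarith

theorem lintegral_lapKernel {lam a y : ℝ} {b : ℝ≥0∞} (hlam : 0 < lam) (ha : 0 ≤ a)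
    (hy : y ∈ Iab a b) :
    ∫⁻ x in Ioi 0, ENNReal.ofReal (lapKernel lam b x y)
      = ENNReal.ofReal (y ^ (-lam) - binv lam b) := by
  have hy0 : 0 < y := ha.trans_lt hy.1
  have hint : ∀ {c : ℝ}, 0 < c → IntegrableOn (fun x => Real.exp (-(x * c))) (Ioi 0) := by
    intro c hc
    simpa [mul_comm] using integrableOn_exp_mul_Ioi (neg_lt_zero.2 hc) 0
  have hval : ∀ {c : ℝ}, 0 < c → ∫ x in Ioi 0, Real.exp (-(x * c)) = c⁻¹ := by
    intro c hc
    simpa [mul_comm] using integral_exp_mul_Ioi (neg_lt_zero.2 hc) 0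
  have hbexp : IntegrableOn (bexp lam b) (Ioi 0) ∧ ∫ x in Ioi 0, bexp lam b x = binv lam b := by
    unfold bexp binv
    split_ifs with hb
    · simp
    · have hb0 : 0 < b.toReal := hy0.trans (lt_toReal_of_mem_Iab ha hb hy)
      exact ⟨hint (Real.rpow_pos_of_pos hb0 _), by
        rw [hval (Real.rpow_pos_of_pos hb0 _), Real.rpow_neg hb0.le]⟩
  have hnonneg : 0 ≤ᵐ[volume.restrict (Ioi 0)] fun x => lapKernel lam b x y := by
    filter_upwards [ae_restrict_mem measurableSet_Ioi] with x hx
    exact lapKernel_nonneg hlam ha (le_of_lt hx) hy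
  have hkint : IntegrableOn (fun x => lapKernel lam b x y) (Ioi 0) :=
    (hint (Real.rpow_pos_of_pos hy0 lam)).sub hbexp.1
  rw [← ofReal_integral_eq_lintegral_ofReal hkint hnonneg]
  unfold lapKernel
  rw [integral_sub (hint (Real.rpow_pos_of_pos hy0 lam)) hbexp.1,
    hval (Real.rpow_pos_of_pos hy0 lam), hbexp.2, Real.rpow_neg hy0.le]

theorem lintegral_lintegral_lapKernel {lam a : ℝ} {b : ℝ≥0∞} (hlam : 0 < lam) (ha : 0 ≤ a)
    {h : ℝ → ℝ≥0∞} (hh : AEMeasurable h (volume.restrict (Iab a b))) :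
    ∫⁻ x in Ioi 0, ∫⁻ y in Iab a b, h y * ENNReal.ofReal (lapKernel lam b x y)
      = ∫⁻ y in Iab a b, h y * ENNReal.ofReal (y ^ (-lam) - binv lam b) := by
  rw [lintegral_lintegral_swap
    (hh.comp_snd.mul (measurable_lapKernel lam b).ennreal_ofReal.aemeasurable)]
  refine setLIntegral_congr_fun (measurableSet_Iab a b) fun y hy => ?_
  rw [lintegral_const_mul _ (measurable_lapKernel lam b).of_uncurry_right.ennreal_ofReal,
    lintegral_lapKernel hlam ha hy]

def lapWeight (lam : ℝ) (b : ℝ≥0∞) (v : ℝ → ℝ) (y : ℝ) : ℝ≥0∞ :=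
  ENNReal.ofReal (v y) * ENNReal.ofReal (y ^ (-lam) - binv lam b)

theorem aemeasurable_lapWeight {lam : ℝ} {b : ℝ≥0∞} {v : ℝ → ℝ} {μ : Measure ℝ}
    (hv : AEMeasurable v μ) : AEMeasurable (lapWeight lam b v) μ :=
  hv.ennreal_ofReal.mul
    (by fun_prop : Measurable fun y : ℝ => y ^ (-lam) - binv lam b).ennreal_ofReal.aemeasurable

section Operator

variable {p p' lam a : ℝ} {b : ℝ≥0∞} {v : ℝ → ℝ}

theorem Lab_eq (f : ℝ → ℝ) (x : ℝ) :
    Lab lam v a b f x = ∫ y in Iab a b, f y * v y * lapKernel lam b x y :=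
  rfl

theorem eLpNorm_Lab_le (hpq : p.HolderConjugate p') (hlam : 0 < lam) (ha : 0 ≤ a)
    (hv0 : ∀ y ∈ Iab a b, 0 ≤ v y) (hv : AEMeasurable v (volume.restrict (Iab a b)))
    {f : ℝ → ℝ} (hf : AEStronglyMeasurable f (volume.restrict (Iab a b))) :
    eLpNorm (Lab lam v a b f) 1 (volume.restrict (Ioi 0))
      ≤ (∫⁻ y in Iab a b, lapWeight lam b v y ^ p') ^ (1 / p')
        * eLpNorm f (ENNReal.ofReal p) (volume.restrict (Iab a b)) := by
  calc eLpNorm (Lab lam v a b f) 1 (volume.restrict (Ioi 0))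
      = ∫⁻ x in Ioi 0, ‖Lab lam v a b f x‖ₑ := eLpNorm_one_eq_lintegral_enorm
    _ ≤ ∫⁻ x in Ioi 0, ∫⁻ y in Iab a b,
          ‖f y‖ₑ * ENNReal.ofReal (v y) * ENNReal.ofReal (lapKernel lam b x y) := by
        refine setLIntegral_mono' measurableSet_Ioi fun x hx => ?_
        rw [Lab_eq]
        refine (enorm_integral_le_lintegral_enorm _).trans_eq ?_
        refine setLIntegral_congr_fun (measurableSet_Iab a b) fun y hy => ?_
        rw [enorm_mul, enorm_mul, Real.enorm_eq_ofReal (hv0 y hy),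
          Real.enorm_eq_ofReal (lapKernel_nonneg hlam ha (le_of_lt hx) hy)]
    _ = ∫⁻ y in Iab a b, ‖f y‖ₑ * lapWeight lam b v y := by
        rw [lintegral_lintegral_lapKernel hlam ha
          (h := fun y => ‖f y‖ₑ * ENNReal.ofReal (v y)) (hf.enorm.mul hv.ennreal_ofReal)]
        simp only [lapWeight, mul_assoc]
    _ ≤ (∫⁻ y in Iab a b, ‖f y‖ₑ ^ p) ^ (1 / p)
          * (∫⁻ y in Iab a b, lapWeight lam b v y ^ p') ^ (1 / p') :=
        ENNReal.lintegral_mul_le_Lp_mul_Lq _ hpq hf.enorm (aemeasurable_lapWeight hv)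
    _ = _ := by
        rw [eLpNorm_eq_lintegral_rpow_enorm_toReal (by simpa using hpq.pos) ofReal_ne_top,
          toReal_ofReal hpq.nonneg, mul_comm]

theorem Knorm_le_lintegral_lapWeight (hpq : p.HolderConjugate p') (hlam : 0 < lam)
    (ha : 0 ≤ a) (hv0 : ∀ y ∈ Iab a b, 0 ≤ v y)
    (hv : AEMeasurable v (volume.restrict (Iab a b))) :
    Knorm lam v p 1 a b ≤ (∫⁻ y in Iab a b, lapWeight lam b v y ^ p') ^ (1 / p') :=
  iSup_le fun f => ENNReal.div_le_of_le_mul <| by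
    rw [ENNReal.ofReal_one]
    exact eLpNorm_Lab_le hpq hlam ha hv0 hv f.2.1.1

theorem eLpNorm_Lab_le_Knorm_mul {q : ℝ} {f : ℝ → ℝ}
    (hf : MemLp f (ENNReal.ofReal p) (volume.restrict (Iab a b)))
    (hf0 : eLpNorm f (ENNReal.ofReal p) (volume.restrict (Iab a b)) ≠ 0) :
    eLpNorm (Lab lam v a b f) (ENNReal.ofReal q) (volume.restrict (Ioi 0))
      ≤ Knorm lam v p q a b * eLpNorm f (ENNReal.ofReal p) (volume.restrict (Iab a b)) :=
  (ENNReal.div_le_iff hf0 hf.2.ne).1 (le_iSup_of_le ⟨f, hf, hf0⟩ le_rfl)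

theorem eLpNorm_Lab_eq_of_nonneg (hlam : 0 < lam) (ha : 0 ≤ a) (hv0 : ∀ y ∈ Iab a b, 0 ≤ v y)
    {f : ℝ → ℝ} (hf0 : ∀ y, 0 ≤ f y) (hfv : IntegrableOn (fun y => f y * v y) (Iab a b)) :
    eLpNorm (Lab lam v a b f) 1 (volume.restrict (Ioi 0))
      = ∫⁻ y in Iab a b, ENNReal.ofReal (f y) * lapWeight lam b v y := by
  have hLab : ∀ x ∈ Ioi (0 : ℝ), ‖Lab lam v a b f x‖ₑ
      = ∫⁻ y in Iab a b, ENNReal.ofReal (f y * v y) * ENNReal.ofReal (lapKernel lam b x y) := by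
    intro x hx
    have hnonneg : 0 ≤ᵐ[volume.restrict (Iab a b)] fun y => f y * v y * lapKernel lam b x y := by
      filter_upwards [ae_restrict_mem (measurableSet_Iab a b)] with y hy
      exact mul_nonneg (mul_nonneg (hf0 y) (hv0 y hy)) (lapKernel_nonneg hlam ha (le_of_lt hx) hy)
    have hint : IntegrableOn (fun y => f y * v y * lapKernel lam b x y) (Iab a b) := by
      refine Integrable.mono hfv (hfv.aestronglyMeasurable.mul
        (measurable_lapKernel lam b).of_uncurry_left.aestronglyMeasurable) ?_
      filter_upwards [ae_restrict_mem (measurableSet_Iab a b)] with y hy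
      rw [norm_mul]
      refine mul_le_of_le_one_right (norm_nonneg _) ?_
      rw [Real.norm_of_nonneg (lapKernel_nonneg hlam ha (le_of_lt hx) hy)]
      exact lapKernel_le_one b (le_of_lt hx) (ha.trans hy.1.le)
    rw [Lab_eq, Real.enorm_eq_ofReal (integral_nonneg_of_ae hnonneg),
      ofReal_integral_eq_lintegral_ofReal hint hnonneg]
    refine setLIntegral_congr_fun (measurableSet_Iab a b) fun y hy => ?_
    rw [ENNReal.ofReal_mul (mul_nonneg (hf0 y) (hv0 y hy))]
  rw [eLpNorm_one_eq_lintegral_enorm, setLIntegral_congr_fun measurableSet_Ioi hLab,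
    lintegral_lintegral_lapKernel hlam ha hfv.aemeasurable.ennreal_ofReal]
  refine setLIntegral_congr_fun (measurableSet_Iab a b) fun y _ => ?_
  rw [ENNReal.ofReal_mul (hf0 y), lapWeight, mul_assoc]

end Operator

theorem integrableOn_truncation_rpow_mul {a r : ℝ} {b : ℝ≥0∞} {v : ℝ → ℝ} {W : ℝ → ℝ≥0∞}
    (ha : 0 ≤ a) (hr : 0 < r) (hvloc : LocallyIntegrableOn v (Ioi 0))
    (hW : AEMeasurable W (volume.restrict (Iab a b))) (n : ℕ) :
    IntegrableOn (fun y => (truncation (exhaustIab a b) W n y).toReal ^ r * v y) (Iab a b) := by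
  have hIcc : Icc (a + 1 / (n + 1)) n ⊆ Ioi (0 : ℝ) := fun y hy =>
    (add_pos_of_nonneg_of_pos ha (by positivity)).trans_le hy.1
  have hv : IntegrableOn v (exhaustIab a b n) :=
    (hvloc.integrableOn_compact_subset hIcc isCompact_Icc).mono_set
      (exhaustIab_subset_Icc a b n)
  have hu : AEStronglyMeasurable (fun y => (truncation (exhaustIab a b) W n y).toReal ^ r)
      (volume.restrict (exhaustIab a b n)) :=
    ((aemeasurable_truncation (measurableSet_exhaustIab a b) hW n).mono_measure
      (Measure.restrict_mono inter_subset_left le_rfl)).ennreal_toReal.pow_const r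
      |>.aestronglyMeasurable
  refine IntegrableOn.of_forall_sdiff_eq_zero
    (Integrable.bdd_mul (c := (n : ℝ) ^ r) hv hu (ae_of_all _ fun y => ?_))
    (measurableSet_Iab a b) fun y hy => ?_
  · rw [Real.norm_of_nonneg (by positivity)]
    gcongr
    exact toReal_le_of_le_ofReal n.cast_nonneg (by simpa using truncation_le n y)
  · rw [truncation_eq_zero_of_notMem hy.2, toReal_zero, Real.zero_rpow hr.ne', zero_mul]

theorem volume_restrict_exhaustIab_ne_top (a : ℝ) (b : ℝ≥0∞) (n : ℕ) :
    volume.restrict (Iab a b) (exhaustIab a b n) ≠ ∞ :=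
  ((Measure.restrict_apply_le _ _).trans (measure_mono (exhaustIab_subset_Icc a b n))).trans_lt
    measure_Icc_lt_top |>.ne

theorem lintegral_lapWeight_le_Knorm {p p' lam a : ℝ} {b : ℝ≥0∞} {v : ℝ → ℝ}
    (hpq : p.HolderConjugate p') (hlam : 0 < lam) (ha : 0 ≤ a) (hv0 : ∀ y ∈ Iab a b, 0 ≤ v y)
    (hvloc : LocallyIntegrableOn v (Ioi 0)) :
    (∫⁻ y in Iab a b, lapWeight lam b v y ^ p') ^ (1 / p') ≤ Knorm lam v p 1 a b := by
  set u := truncation (exhaustIab a b) (lapWeight lam b v)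
  have hW : AEMeasurable (lapWeight lam b v) (volume.restrict (Iab a b)) :=
    aemeasurable_lapWeight
      (hvloc.aestronglyMeasurable.mono_set (Iab_subset_Ioi ha b)).aemeasurable
  have hu := aemeasurable_truncation (measurableSet_exhaustIab a b) hW
  have hfin : ∀ n, ∫⁻ y in Iab a b, u n y ^ p' ≠ ∞ := fun n =>
    ne_top_of_le_ne_top (mul_ne_top (rpow_ne_top_of_nonneg hpq.symm.nonneg (natCast_ne_top n))
      (volume_restrict_exhaustIab_ne_top a b n))
      (lintegral_truncation_rpow_le (measurableSet_exhaustIab a b) hpq.symm.pos n)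
  refine lintegral_rpow_one_div_le_of_dual_bound hpq hu
    (monotone_truncation (monotone_exhaustIab a b)) ?_ hfin fun n hn => ?_
  · filter_upwards [ae_restrict_mem (measurableSet_Iab a b)] with y hy
    exact tendsto_truncation (monotone_exhaustIab a b) (by rwa [iUnion_exhaustIab])
  set f := fun y => (u n y).toReal ^ (p' - 1)
  have hnorm : eLpNorm f (ENNReal.ofReal p) (volume.restrict (Iab a b))
      = (∫⁻ y in Iab a b, u n y ^ p') ^ (1 / p) :=
    eLpNorm_toReal_rpow_sub_one hpq (truncation_ne_top n)
  have hmem : MemLp f (ENNReal.ofReal p) (volume.restrict (Iab a b)) :=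
    ⟨((hu n).ennreal_toReal.pow_const _).aestronglyMeasurable,
      hnorm ▸ rpow_lt_top_of_nonneg hpq.one_div_nonneg (hfin n)⟩
  have hnorm0 : eLpNorm f (ENNReal.ofReal p) (volume.restrict (Iab a b)) ≠ 0 :=
    hnorm ▸ (ENNReal.rpow_pos (pos_iff_ne_zero.2 hn) (hfin n)).ne'
  calc ∫⁻ y in Iab a b, u n y ^ (p' - 1) * lapWeight lam b v y
      = ∫⁻ y in Iab a b, ENNReal.ofReal (f y) * lapWeight lam b v y := by
        refine lintegral_congr fun y => ?_
        simp only [f]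
        rw [← ofReal_rpow_of_nonneg toReal_nonneg hpq.symm.sub_one_pos.le,
          ofReal_toReal (truncation_ne_top n y)]
    _ = eLpNorm (Lab lam v a b f) 1 (volume.restrict (Ioi 0)) :=
        (eLpNorm_Lab_eq_of_nonneg hlam ha hv0 (fun y => by positivity)
          (integrableOn_truncation_rpow_mul ha hpq.symm.sub_one_pos hvloc hW n)).symm
    _ ≤ Knorm lam v p 1 a b * eLpNorm f (ENNReal.ofReal p) (volume.restrict (Iab a b)) := by
        simpa using eLpNorm_Lab_le_Knorm_mul (lam := lam) (v := v) (q := 1) hmem hnorm0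
    _ = Knorm lam v p 1 a b * (∫⁻ y in Iab a b, u n y ^ p') ^ (1 / p) := by rw [hnorm]

theorem statement4_general
    (p lam a : ℝ) (b : ℝ≥0∞) (hp : 1 < p)
    (hlam : 0 < lam) (ha : 0 ≤ a)
    (v : ℝ → ℝ)
    (hv0 : ∀ y ∈ Ioi (0:ℝ), 0 ≤ v y)
    (hvloc : LocallyIntegrableOn v (Ioi 0))
    (p' : ℝ) (hp' : p' = p / (p - 1)) :
    Knorm lam v p 1 a b =
      (∫⁻ t in Iab a b,
        ENNReal.ofReal (t ^ (-lam) - binv lam b) ^ p' *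
          ENNReal.ofReal (v t) ^ p') ^ (1/p') := by
  have hpq : p.HolderConjugate p' := (Real.holderConjugate_iff_eq_conjExponent hp).2 hp'
  have hv0' : ∀ y ∈ Iab a b, 0 ≤ v y := fun y hy => hv0 y (Iab_subset_Ioi ha b hy)
  have hv : AEMeasurable v (volume.restrict (Iab a b)) :=
    (hvloc.aestronglyMeasurable.mono_set (Iab_subset_Ioi ha b)).aemeasurable
  have hweight : ∀ t, ENNReal.ofReal (t ^ (-lam) - binv lam b) ^ p' * ENNReal.ofReal (v t) ^ p'
      = lapWeight lam b v t ^ p' := fun t => by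
    rw [lapWeight, mul_rpow_of_nonneg _ _ hpq.symm.nonneg, mul_comm]
  simp only [hweight]
  exact le_antisymm (Knorm_le_lintegral_lapWeight hpq hlam ha hv0' hv)
    (lintegral_lapWeight_le_Knorm hpq hlam ha hv0' hvloc)

/-- Lemma 2, case `1 = q < p < ∞`: `K(I) = B₁ = (∫_I [t^{-λ}-b^{-λ}]^{p'} v^{p'}(t) dt)^{1/p'}`. -/
theorem statement4
    (p lam a : ℝ) (b : ℝ≥0∞) (hp : 1 < p)
    (hlam : 0 < lam) (ha : 0 ≤ a) (hab : ENNReal.ofReal a < b)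
    (v : ℝ → ℝ)
    (hv0 : ∀ y ∈ Ioi (0:ℝ), 0 ≤ v y)
    (hvloc : LocallyIntegrableOn v (Ioi 0))
    (p' : ℝ) (hp' : p' = p / (p - 1)) :
    Knorm lam v p 1 a b =
      (∫⁻ t in Iab a b,
        ENNReal.ofReal (t ^ (-lam) - binv lam b) ^ p' *
          ENNReal.ofReal (v t) ^ p') ^ (1/p') :=
  statement4_general p lam a b hp hlam ha v hv0 hvloc p' hp'
end
end

section
/- Let 1<p<∞, 0<q<∞, λ>0 and let v be a nonnegative locally integrable weight on (0,∞). Set p'=p/(p−1), Δ_k=[2^{k−1},2^k] and σ_k(1) = (1−2^{−λ})^{1/q}·2^{−kλ/q}·(∫_{Δ_k} v^{p'}(y)dy)^{1/p'}. Let k₁,k₂,k₃∈ℤ with k₁<k₃ and k₁≤k₂≤k₃, and let z₁∈Δ_{k₁}, z₀∈Δ_{k₂}, z₂∈Δ_{k₃} with z₁≤z₀≤z₂. Then [z₀^{−λ}−z₂^{−λ}]^{1/q}·(∫_{z₁}^{z₀} v^{p'}(y)dy)^{1/p'} ≤ C·max_{k₁≤k≤k₂} σ_k(1), where C = 2^{λ/q}(1−2^{−λ})^{−1/q}(1−2^{−p'λ/q})^{−1/p'}.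 -/
/-! Cover `(z₁, z₀)` by the dyadic blocks `Δ_k`, `k₁ ≤ k ≤ k₂`. Writing `M = max σ_k`, the
definition of `σ_k` gives `∫_{Δ_k} v^{p'} ≤ M^{p'} (1-2^{-λ})^{-p'/q} 2^{kp'λ/q}`, and the sum of
these bounds is a geometric series dominated by its last term times `(1-2^{-p'λ/q})^{-1}`. The
first factor is at most `z₀^{-λ/q} ≤ 2^{(1-k₂)λ/q}`, which cancels the growth `2^{k₂λ/q}`. -/

open MeasureTheory Set ENNReal Filter

noncomputable section

theorem Ioo_subset_biUnion_dyad {k₁ k₂ : ℤ} {z₁ z₀ : ℝ}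
    (hz₁ : (2:ℝ) ^ (k₁ - 1) ≤ z₁) (hz₀ : z₀ ≤ (2:ℝ) ^ k₂) :
    Ioo z₁ z₀ ⊆ ⋃ k ∈ Finset.Icc k₁ k₂, dyad k := by
  intro y ⟨hzy, hyz⟩
  have h2 : (1:ℝ) < 2 := one_lt_two
  obtain ⟨n, hn_lt, hn_le⟩ :=
    exists_mem_Ioc_zpow ((_root_.zpow_pos two_pos _).trans_le (hz₁.trans hzy.le)) h2
  have hk₁ : k₁ - 1 < n + 1 :=
    (zpow_lt_zpow_iff_right₀ h2).1 ((hz₁.trans_lt hzy).trans_le hn_le)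
  have hk₂ : n < k₂ := (zpow_lt_zpow_iff_right₀ h2).1 ((hn_lt.trans hyz).trans_le hz₀)
  refine mem_biUnion (x := n + 1) (Finset.mem_Icc.2 ⟨by omega, by omega⟩) ⟨?_, hn_le⟩
  simpa using hn_lt.le

theorem lintegral_Ioo_le_sum_dyad {k₁ k₂ : ℤ} {z₁ z₀ : ℝ}
    (hz₁ : (2:ℝ) ^ (k₁ - 1) ≤ z₁) (hz₀ : z₀ ≤ (2:ℝ) ^ k₂) (f : ℝ → ℝ≥0∞) :
    ∫⁻ y in Ioo z₁ z₀, f y ≤ ∑ k ∈ Finset.Icc k₁ k₂, ∫⁻ y in dyad k, f y :=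
  calc ∫⁻ y in Ioo z₁ z₀, f y
      ≤ ∫⁻ y in ⋃ k : {k // k ∈ Finset.Icc k₁ k₂}, dyad k, f y := by
        refine lintegral_mono_set ((Ioo_subset_biUnion_dyad hz₁ hz₀).trans ?_)
        rw [← Finset.set_biUnion_coe, biUnion_eq_iUnion]
        exact subset_rfl
    _ ≤ ∑' k : {k // k ∈ Finset.Icc k₁ k₂}, ∫⁻ y in dyad k, f y := lintegral_iUnion_le _ _
    _ = ∑ k ∈ Finset.Icc k₁ k₂, ∫⁻ y in dyad k, f y :=
      Finset.tsum_subtype (Finset.Icc k₁ k₂) fun k => ∫⁻ y in dyad k, f y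

theorem sum_Icc_zpow_le {b : ℝ} (hb : 1 < b) (k₁ k₂ : ℤ) :
    ∑ k ∈ Finset.Icc k₁ k₂, b ^ k ≤ b ^ k₂ * (1 - b⁻¹)⁻¹ := by
  have hb₀ : b ≠ 0 := (zero_lt_one.trans hb).ne'
  calc ∑ k ∈ Finset.Icc k₁ k₂, b ^ k
      = b ^ k₂ * ∑ n ∈ Finset.range (k₂ + 1 - k₁).toNat, b⁻¹ ^ n := by
        rw [Finset.mul_sum]
        refine Finset.sum_nbij' (fun k => (k₂ - k).toNat) (fun n => k₂ - n) ?_ ?_ ?_ ?_ ?_ <;>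
          intro k hk <;> simp only [Finset.mem_Icc, Finset.mem_range] at hk ⊢
        · omega
        · omega
        · omega
        · omega
        · rw [inv_pow, ← zpow_natCast, Int.toNat_of_nonneg (by omega), ← zpow_neg,
            ← zpow_add₀ hb₀]
          ring_nf
    _ ≤ b ^ k₂ * (1 - b⁻¹)⁻¹ := by
        gcongr
        rw [Finset.range_eq_Ico]
        exact (geom_sum_Ico_le_of_lt_one (inv_nonneg.2 (zero_le_one.trans hb.le))
          (inv_lt_one_of_one_lt₀ hb)).trans_eq (by rw [pow_zero, one_div])

theorem rpow_neg_sub_rpow_neg_le {k : ℤ} {z₀ z₂ lam : ℝ} (hz₀ : (2:ℝ) ^ (k - 1) ≤ z₀)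
    (hz₂ : 0 ≤ z₂) (hlam : 0 ≤ lam) : z₀ ^ (-lam) - z₂ ^ (-lam) ≤ 2 ^ ((1 - k) * lam) :=
  calc z₀ ^ (-lam) - z₂ ^ (-lam)
      ≤ ((2:ℝ) ^ (k - 1)) ^ (-lam) := by
        have := Real.rpow_nonneg hz₂ (-lam)
        have := Real.rpow_le_rpow_of_nonpos (zpow_pos two_pos _) hz₀ (neg_nonpos.2 hlam)
        linarith
    _ = 2 ^ ((1 - k) * lam) := by
        rw [← Real.rpow_intCast, ← Real.rpow_mul zero_le_two]
        push_cast
        ring_nf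

theorem rpow_sum_le_of_forall_mul_rpow_le {ι : Type*} (s : Finset ι) {r : ℝ} (hr : 0 < r)
    {I : ι → ℝ≥0∞} {c : ι → ℝ} (hc : ∀ i ∈ s, 0 < c i) {M : ℝ≥0∞}
    (h : ∀ i ∈ s, ENNReal.ofReal (c i) * I i ^ (1 / r) ≤ M) :
    (∑ i ∈ s, I i) ^ (1 / r) ≤ M * ENNReal.ofReal ((∑ i ∈ s, (c i)⁻¹ ^ r) ^ (1 / r)) := by
  have hI : ∀ i ∈ s, I i ≤ M ^ r * ENNReal.ofReal ((c i)⁻¹ ^ r) := by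
    intro i hi
    have hci := hc i hi
    have hroot : I i ^ (1 / r) ≤ M * ENNReal.ofReal (c i)⁻¹ := by
      rw [ENNReal.ofReal_inv_of_pos hci, ← div_eq_mul_inv, ENNReal.le_div_iff_mul_le
        (.inl (ENNReal.ofReal_pos.2 hci).ne') (.inl ENNReal.ofReal_ne_top), mul_comm]
      exact h i hi
    calc I i = (I i ^ (1 / r)) ^ r := by
          rw [← ENNReal.rpow_mul, one_div_mul_cancel hr.ne', ENNReal.rpow_one]
      _ ≤ (M * ENNReal.ofReal (c i)⁻¹) ^ r := by gcongr
      _ = M ^ r * ENNReal.ofReal ((c i)⁻¹ ^ r) := by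
        rw [ENNReal.mul_rpow_of_nonneg _ _ hr.le,
          ENNReal.ofReal_rpow_of_nonneg (inv_nonneg.2 hci.le) hr.le]
  calc (∑ i ∈ s, I i) ^ (1 / r)
      ≤ (M ^ r * ENNReal.ofReal (∑ i ∈ s, (c i)⁻¹ ^ r)) ^ (1 / r) := by
        rw [ENNReal.ofReal_sum_of_nonneg fun i hi => Real.rpow_nonneg (inv_nonneg.2 (hc i hi).le) r,
          Finset.mul_sum]
        gcongr with i hi
        exact hI i hi
    _ = M * ENNReal.ofReal ((∑ i ∈ s, (c i)⁻¹ ^ r) ^ (1 / r)) := by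
        rw [ENNReal.mul_rpow_of_nonneg _ _ (one_div_pos.2 hr).le, ← ENNReal.rpow_mul,
          mul_one_div_cancel hr.ne', ENNReal.rpow_one, ENNReal.ofReal_rpow_of_nonneg
            (Finset.sum_nonneg fun i hi => Real.rpow_nonneg (inv_nonneg.2 (hc i hi).le) r)
            (one_div_pos.2 hr).le]

theorem two_rpow_mul_rpow_sum_le {a r A : ℝ} (ha : 0 < a) (hr : 0 < r) (hA : 0 < A)
    (k₁ k₂ : ℤ) :
    2 ^ ((1 - k₂) * a) * (∑ k ∈ Finset.Icc k₁ k₂, (A * 2 ^ (-(k * a)))⁻¹ ^ r) ^ (1 / r) ≤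
      2 ^ a * A⁻¹ * (1 - 2 ^ (-(r * a))) ^ (-(1 / r)) := by
  set b : ℝ := 2 ^ (r * a)
  have hb : 1 < b := Real.one_lt_rpow one_lt_two (mul_pos hr ha)
  have hb_inv : b⁻¹ = 2 ^ (-(r * a)) := (Real.rpow_neg zero_le_two _).symm
  have hterm : ∀ k : ℤ, (A * 2 ^ (-(k * a)))⁻¹ ^ r = A⁻¹ ^ r * b ^ k := by
    intro k
    rw [mul_inv, Real.mul_rpow (inv_nonneg.2 hA.le) (inv_nonneg.2 (by positivity)),
      ← Real.rpow_neg zero_le_two, ← Real.rpow_mul zero_le_two, ← Real.rpow_intCast,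
      ← Real.rpow_mul zero_le_two]
    ring_nf
  have hsum : ∑ k ∈ Finset.Icc k₁ k₂, (A * 2 ^ (-(k * a)))⁻¹ ^ r ≤
      A⁻¹ ^ r * 2 ^ (r * a * k₂) * (1 - b⁻¹)⁻¹ := by
    rw [Finset.sum_congr rfl fun k _ => hterm k, ← Finset.mul_sum, Real.rpow_mul zero_le_two,
      Real.rpow_intCast, mul_assoc]
    gcongr
    exact sum_Icc_zpow_le hb k₁ k₂
  have hgap : 0 < 1 - b⁻¹ := sub_pos.2 (inv_lt_one_of_one_lt₀ hb)
  calc 2 ^ ((1 - k₂) * a) * (∑ k ∈ Finset.Icc k₁ k₂, (A * 2 ^ (-(k * a)))⁻¹ ^ r) ^ (1 / r)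
      ≤ 2 ^ ((1 - k₂) * a) * (A⁻¹ ^ r * 2 ^ (r * a * k₂) * (1 - b⁻¹)⁻¹) ^ (1 / r) := by
        gcongr
    _ = 2 ^ a * A⁻¹ * (1 - 2 ^ (-(r * a))) ^ (-(1 / r)) := by
        rw [Real.mul_rpow (by positivity) (inv_nonneg.2 hgap.le),
          Real.mul_rpow (by positivity) (by positivity), ← Real.rpow_mul (inv_nonneg.2 hA.le),
          ← Real.rpow_mul zero_le_two, Real.inv_rpow hgap.le, ← Real.rpow_neg hgap.le, hb_inv,
          mul_one_div_cancel hr.ne', Real.rpow_one]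
        have : (2:ℝ) ^ a = 2 ^ ((1 - k₂) * a) * 2 ^ (r * a * k₂ * (1 / r)) := by
          rw [← Real.rpow_add two_pos]
          congr 1
          field_simp
          ring
        rw [this]
        ring

theorem statement10_general
    (p q lam : ℝ) (hp : 1 < p) (hq : 0 < q) (hlam : 0 < lam)
    (v : ℝ → ℝ)
    (p' : ℝ) (hp' : p' = p / (p - 1))
    (σ : ℤ → ℝ≥0∞)
    (hσ : ∀ k : ℤ, σ k =
      ENNReal.ofReal ((1 - 2 ^ (-lam)) ^ (1/q) * 2 ^ (-((k:ℝ) * lam) / q)) *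
        (∫⁻ y in dyad k, ENNReal.ofReal (v y) ^ p') ^ (1/p'))
    (k₁ k₂ : ℤ)
    (z₁ z₀ z₂ : ℝ) (hz₁ : z₁ ∈ dyad k₁) (hz₀ : z₀ ∈ dyad k₂)
    (h02 : z₀ ≤ z₂)
    (C : ℝ) (hC : C = 2 ^ (lam/q) * (1 - 2 ^ (-lam)) ^ (-(1/q)) *
      (1 - 2 ^ (-(p' * lam / q))) ^ (-(1/p'))) :
    ENNReal.ofReal (z₀ ^ (-lam) - z₂ ^ (-lam)) ^ (1/q) *
        (∫⁻ y in Ioo z₁ z₀, ENNReal.ofReal (v y) ^ p') ^ (1/p') ≤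
      ENNReal.ofReal C * ⨆ k ∈ Icc k₁ k₂, σ k := by
  have hp'_pos : 0 < p' := by rw [hp']; exact div_pos (by linarith) (by linarith)
  have hgap : 0 < 1 - (2:ℝ) ^ (-lam) :=
    sub_pos.2 (Real.rpow_lt_one_of_one_lt_of_neg one_lt_two (neg_neg_of_pos hlam))
  set A : ℝ := (1 - 2 ^ (-lam)) ^ (1/q)
  have hA : 0 < A := Real.rpow_pos_of_pos hgap _
  set M := ⨆ k ∈ Icc k₁ k₂, σ k
  have hσM : ∀ k ∈ Finset.Icc k₁ k₂, ENNReal.ofReal (A * 2 ^ (-(k * (lam / q)))) *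
      (∫⁻ y in dyad k, ENNReal.ofReal (v y) ^ p') ^ (1 / p') ≤ M := by
    intro k hk
    rw [← neg_mul, ← mul_div_assoc, neg_mul, ← hσ k]
    exact le_biSup σ (by simpa using hk)
  have hfirst : ENNReal.ofReal (z₀ ^ (-lam) - z₂ ^ (-lam)) ^ (1/q) ≤
      ENNReal.ofReal (2 ^ ((1 - k₂) * (lam / q))) := by
    have hz₀_pos : 0 < z₀ := (_root_.zpow_pos two_pos _).trans_le hz₀.1
    have hsplit : (2:ℝ) ^ ((1 - k₂) * (lam / q)) = (2 ^ ((1 - k₂) * lam)) ^ (1 / q) := by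
      rw [← Real.rpow_mul zero_le_two]; ring_nf
    rw [hsplit, ← ENNReal.ofReal_rpow_of_nonneg (by positivity) (by positivity)]
    gcongr
    exact rpow_neg_sub_rpow_neg_le hz₀.1 (hz₀_pos.le.trans h02) hlam.le
  have hsecond : (∫⁻ y in Ioo z₁ z₀, ENNReal.ofReal (v y) ^ p') ^ (1/p') ≤
      M * ENNReal.ofReal ((∑ k ∈ Finset.Icc k₁ k₂, (A * 2 ^ (-(k * (lam / q))))⁻¹ ^ p') ^ (1/p')) :=
    (ENNReal.rpow_le_rpow (lintegral_Ioo_le_sum_dyad hz₁.1 hz₀.2 _) (by positivity)).trans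
      (rpow_sum_le_of_forall_mul_rpow_le _ hp'_pos (fun k _ => by positivity) hσM)
  have hconst := two_rpow_mul_rpow_sum_le (div_pos hlam hq) hp'_pos hA k₁ k₂
  calc _ ≤ _ := mul_le_mul' hfirst hsecond
    _ = ENNReal.ofReal (2 ^ ((1 - k₂) * (lam / q)) *
          (∑ k ∈ Finset.Icc k₁ k₂, (A * 2 ^ (-(k * (lam / q))))⁻¹ ^ p') ^ (1/p')) * M := by
        rw [ENNReal.ofReal_mul (by positivity)]; ring
    _ ≤ ENNReal.ofReal C * M := by
        gcongr
        rw [hC, Real.rpow_neg hgap.le (1 / q)]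
        simpa only [mul_div_assoc] using hconst

/-- Lemma 7: pointwise dyadic estimate with the explicit constant
`C = 2^{λ/q}(1-2^{-λ})^{-1/q}(1-2^{-p'λ/q})^{-1/p'}`. -/
theorem statement10
    (p q lam : ℝ) (hp : 1 < p) (hq : 0 < q) (hlam : 0 < lam)
    (v : ℝ → ℝ)
    (hv0 : ∀ y ∈ Ioi (0:ℝ), 0 ≤ v y)
    (hvloc : LocallyIntegrableOn v (Ioi 0))
    (p' : ℝ) (hp' : p' = p / (p - 1))
    (σ : ℤ → ℝ≥0∞)
    (hσ : ∀ k : ℤ, σ k =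
      ENNReal.ofReal ((1 - 2 ^ (-lam)) ^ (1/q) * 2 ^ (-((k:ℝ) * lam) / q)) *
        (∫⁻ y in dyad k, ENNReal.ofReal (v y) ^ p') ^ (1/p'))
    (k₁ k₂ k₃ : ℤ) (h13 : k₁ < k₃) (h12 : k₁ ≤ k₂) (h23 : k₂ ≤ k₃)
    (z₁ z₀ z₂ : ℝ) (hz₁ : z₁ ∈ dyad k₁) (hz₀ : z₀ ∈ dyad k₂) (hz₂ : z₂ ∈ dyad k₃)
    (h10 : z₁ ≤ z₀) (h02 : z₀ ≤ z₂)
    (C : ℝ) (hC : C = 2 ^ (lam/q) * (1 - 2 ^ (-lam)) ^ (-(1/q)) *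
      (1 - 2 ^ (-(p' * lam / q))) ^ (-(1/p'))) :
    ENNReal.ofReal (z₀ ^ (-lam) - z₂ ^ (-lam)) ^ (1/q) *
        (∫⁻ y in Ioo z₁ z₀, ENNReal.ofReal (v y) ^ p') ^ (1/p') ≤
      ENNReal.ofReal C * ⨆ k ∈ Icc k₁ k₂, σ k :=
  statement10_general p q lam hp hq hlam v p' hp' σ hσ k₁ k₂ z₁ z₀ z₂ hz₁ hz₀ h02 C hC

end
end

section
/- Let 1<p<∞, 0<q<∞, λ>0 and let v be a nonnegative locally integrable weight on (0,∞). Set p'=p/(p−1), θ=p'q/(p'+q), Δ_k=[2^{k−1},2^k] and σ_k(1) = (1−2^{−λ})^{1/q}·2^{−kλ/q}·(∫_{Δ_k} v^{p'}(y)dy)^{1/p'}. Let k∈ℤ, let 2^{k−1}<c₁<…<c_{l+1}<2^k, set I_n=(c_n,c_{n+1}) and take z_n∈I_n for n=1,…,l. Then there is a constant C>0 depending only on p, q, λ such that Σ_{n=1}^l [z_n^{−λ}−c_{n+1}^{−λ}]^{θ/q}·(∫_{c_n}^{z_n} v^{p'}(y)dy)^{θ/p'} ≤ C·σ_k(1)^θ.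 -/
open MeasureTheory Set ENNReal Filter

noncomputable section

/-
Hölder's inequality for sums with exponents `q/θ` and `p'/θ` (note `θ/q + θ/p' = 1`) bounds the
sum by `(Σ_n [z_n^{-λ} - c_{n+1}^{-λ}])^{θ/q} (Σ_n ∫_{c_n}^{z_n} v^{p'})^{θ/p'}`. The first sum is
dominated by the telescoping sum `Σ_n [c_n^{-λ} - c_{n+1}^{-λ}] ≤ c_1^{-λ} ≤ 2^{-(k-1)λ}`, and the
intervals `(c_n, z_n)` are disjoint subsets of `Δ_k`, so the second sum is at most `∫_{Δ_k} v^{p'}`.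
Finally `2^{-(k-1)λ} = 2^λ (1 - 2^{-λ})⁻¹ · (1 - 2^{-λ}) 2^{-kλ}`, which gives the constant
`C = (2^λ / (1 - 2^{-λ}))^{θ/q}`.
-/

theorem ENNReal.sum_rpow_mul_rpow_le {ι : Type*} (s : Finset ι) (a b : ι → ℝ≥0∞) {α β : ℝ}
    (hα : 0 < α) (hβ : 0 < β) (hαβ : α + β = 1) :
    ∑ i ∈ s, a i ^ α * b i ^ β ≤ (∑ i ∈ s, a i) ^ α * (∑ i ∈ s, b i) ^ β := by
  have cancel : ∀ (x : ℝ≥0∞) {r : ℝ}, 0 < r → (x ^ r) ^ r⁻¹ = x := fun x r hr => by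
    rw [← ENNReal.rpow_mul, mul_inv_cancel₀ hr.ne', ENNReal.rpow_one]
  simpa only [cancel _ hα, cancel _ hβ, one_div, inv_inv] using
    ENNReal.inner_le_Lp_mul_Lq s (fun i => a i ^ α) (fun i => b i ^ β)
      (Real.HolderConjugate.inv_inv hα hβ hαβ)

section IntervalPartition

variable {c z : ℕ → ℝ} {l : ℕ}

theorem monotoneOn_Icc_of_lt_succ (hc : ∀ n, 1 ≤ n → n ≤ l → c n < c (n + 1)) :
    MonotoneOn c (Set.Icc 1 (l + 1)) :=
  monotoneOn_of_le_add_one Set.ordConnected_Icc fun n _ hn hn' =>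
    (hc n hn.1 (by simp only [Set.mem_Icc] at hn'; omega)).le

theorem sum_ofReal_sub_le_of_antitoneOn (hc : MonotoneOn c (Set.Icc 1 (l + 1))) {g : ℝ → ℝ}
    (hg : AntitoneOn g (Set.Ici (c 1)))
    (hz : ∀ n ∈ Finset.Icc 1 l, z n ∈ Set.Icc (c n) (c (n + 1))) :
    ∑ n ∈ Finset.Icc 1 l, ENNReal.ofReal (g (z n) - g (c (n + 1))) ≤
      ENNReal.ofReal (g (c 1) - g (c (l + 1))) := by
  have hcn : ∀ n ∈ Finset.Icc 1 l, c 1 ≤ c n := fun n hn => by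
    rw [Finset.mem_Icc] at hn
    exact hc ⟨le_rfl, by omega⟩ ⟨hn.1, by omega⟩ hn.1
  have hzn : ∀ n ∈ Finset.Icc 1 l, g (c (n + 1)) ≤ g (z n) ∧ g (z n) ≤ g (c n) := fun n hn =>
    have hz1 : c 1 ≤ z n := (hcn n hn).trans (hz n hn).1
    ⟨hg hz1 (hz1.trans (hz n hn).2) (hz n hn).2, hg (hcn n hn) hz1 (hz n hn).1⟩
  rw [← ENNReal.ofReal_sum_of_nonneg fun n hn => sub_nonneg.mpr (hzn n hn).1]
  refine ENNReal.ofReal_le_ofReal ?_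
  calc ∑ n ∈ Finset.Icc 1 l, (g (z n) - g (c (n + 1)))
      ≤ ∑ n ∈ Finset.Ico 1 (l + 1), (-g (c (n + 1)) - -g (c n)) := by
        rw [Finset.Ico_add_one_right_eq_Icc]
        exact Finset.sum_le_sum fun n hn => by linarith [(hzn n hn).2]
    _ = g (c 1) - g (c (l + 1)) := by
        rw [Finset.sum_Ico_sub (fun n => -g (c n)) (by omega)]
        ring

theorem sum_lintegral_Ioo_le (hc : MonotoneOn c (Set.Icc 1 (l + 1))) {μ : Measure ℝ}
    (f : ℝ → ℝ≥0∞) (hz : ∀ n ∈ Finset.Icc 1 l, z n ≤ c (n + 1)) :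
    ∑ n ∈ Finset.Icc 1 l, ∫⁻ y in Ioo (c n) (z n), f y ∂μ ≤
      ∫⁻ y in Ioo (c 1) (c (l + 1)), f y ∂μ := by
  have hdisj : (↑(Finset.Icc 1 l) : Set ℕ).PairwiseDisjoint fun n => Ioo (c n) (z n) := by
    intro m hm n hn hmn
    wlog hlt : m < n generalizing m n
    · exact (this hn hm hmn.symm (hmn.lt_or_gt.resolve_left hlt)).symm
    simp only [Finset.coe_Icc, Set.mem_Icc] at hm hn
    have hcmn : c (m + 1) ≤ c n := hc ⟨by omega, by omega⟩ ⟨hn.1, by omega⟩ hlt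
    have hzm := hz m (Finset.mem_Icc.mpr hm)
    exact Set.disjoint_left.mpr fun y hym hyn => by linarith [hym.2, hyn.1]
  rw [← lintegral_biUnion_finset hdisj (fun _ _ => measurableSet_Ioo)]
  refine lintegral_mono_set (Set.iUnion₂_subset fun n hn => ?_)
  have hn' := Finset.mem_Icc.mp hn
  exact Set.Ioo_subset_Ioo (hc ⟨le_rfl, by omega⟩ ⟨hn'.1, by omega⟩ hn'.1)
    ((hz n hn).trans (hc ⟨by omega, by omega⟩ ⟨by omega, le_rfl⟩ (by omega)))

theorem sum_ofReal_rpow_neg_sub_le (hc : MonotoneOn c (Set.Icc 1 (l + 1))) (hc1 : 0 < c 1)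
    {lam : ℝ} (hlam : 0 ≤ lam) (hz : ∀ n ∈ Finset.Icc 1 l, z n ∈ Set.Icc (c n) (c (n + 1))) :
    ∑ n ∈ Finset.Icc 1 l, ENNReal.ofReal (z n ^ (-lam) - c (n + 1) ^ (-lam)) ≤
      ENNReal.ofReal (c 1 ^ (-lam)) := by
  have hanti : AntitoneOn (fun x : ℝ => x ^ (-lam)) (Set.Ici (c 1)) := fun x hx _ _ hxy =>
    Real.rpow_le_rpow_of_nonpos (hc1.trans_le hx) hxy (neg_nonpos.mpr hlam)
  refine (sum_ofReal_sub_le_of_antitoneOn hc hanti hz).trans (ENNReal.ofReal_le_ofReal ?_)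
  have hc1l : c 1 ≤ c (l + 1) := hc ⟨le_rfl, by omega⟩ ⟨by omega, le_rfl⟩ (by omega)
  linarith [Real.rpow_nonneg (hc1.le.trans hc1l) (-lam)]

end IntervalPartition

theorem zpow_sub_one_rpow_neg_eq (k : ℤ) {lam : ℝ} (hlam : 0 < lam) :
    ((2:ℝ) ^ (k - 1)) ^ (-lam) =
      2 ^ lam / (1 - 2 ^ (-lam)) * ((1 - 2 ^ (-lam)) * 2 ^ (-((k:ℝ) * lam))) := by
  have ha : (1:ℝ) - 2 ^ (-lam) ≠ 0 :=
    (sub_pos.mpr (Real.rpow_lt_one_of_one_lt_of_neg one_lt_two (neg_neg_of_pos hlam))).ne'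
  rw [← mul_assoc, div_mul_cancel₀ _ ha, ← Real.rpow_intCast, ← Real.rpow_mul zero_le_two,
    ← Real.rpow_add two_pos]
  push_cast
  ring_nf

theorem ENNReal.ofReal_mul_rpow_mul_rpow {x E q θ p' : ℝ} (hx : 0 ≤ x) (hE : 0 ≤ E) (hq : 0 < q)
    (hθ : 0 ≤ θ) (I : ℝ≥0∞) :
    ENNReal.ofReal (x * E) ^ (θ / q) * I ^ (θ / p') =
      ENNReal.ofReal (x ^ (θ / q)) * (ENNReal.ofReal (E ^ (1 / q)) * I ^ (1 / p')) ^ θ := by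
  have hθq : 0 ≤ θ / q := div_nonneg hθ hq.le
  rw [ENNReal.ofReal_mul hx, ENNReal.mul_rpow_of_nonneg _ _ hθq, ENNReal.mul_rpow_of_nonneg _ _ hθ,
    ← ENNReal.ofReal_rpow_of_nonneg hx hθq, ← ENNReal.ofReal_rpow_of_nonneg hE (by positivity),
    ← ENNReal.rpow_mul, ← ENNReal.rpow_mul, mul_assoc]
  ring_nf

theorem sigmaK_one_coeff_eq {lam q : ℝ} (hlam : 0 < lam) (k : ℤ) :
    (1 - (2:ℝ) ^ (-lam)) ^ (1 / q) * 2 ^ (-((k:ℝ) * lam) / q) =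
      ((1 - 2 ^ (-lam)) * 2 ^ (-((k:ℝ) * lam))) ^ (1 / q) := by
  have ha : (0:ℝ) ≤ 1 - 2 ^ (-lam) :=
    sub_nonneg.mpr (Real.rpow_le_one_of_one_le_of_nonpos one_le_two (by linarith))
  rw [Real.mul_rpow ha (by positivity), ← Real.rpow_mul zero_le_two, mul_one_div]

/-- Lemma 8: summation estimate inside one dyadic interval, `Σ_n […]^{θ/q}[…]^{θ/p'} ≲ σ_k(1)^θ`. -/
theorem statement11
    (p q lam : ℝ) (hp : 1 < p) (hq : 0 < q) (hlam : 0 < lam)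
    (p' θ : ℝ) (hp' : p' = p / (p - 1)) (hθ : θ = p' * q / (p' + q)) :
    ∃ C : ℝ, 0 < C ∧
      ∀ (v : ℝ → ℝ), (∀ y ∈ Ioi (0:ℝ), 0 ≤ v y) → LocallyIntegrableOn v (Ioi 0) →
      ∀ (k : ℤ) (l : ℕ) (c z : ℕ → ℝ),
        (∀ n, 1 ≤ n → n ≤ l → c n < c (n + 1)) →
        (2:ℝ) ^ (k - 1) < c 1 → c (l + 1) < (2:ℝ) ^ k →
        (∀ n, 1 ≤ n → n ≤ l → z n ∈ Ioo (c n) (c (n + 1))) →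
        ∑ n ∈ Finset.Icc 1 l,
          ENNReal.ofReal ((z n) ^ (-lam) - (c (n + 1)) ^ (-lam)) ^ (θ/q) *
            (∫⁻ y in Ioo (c n) (z n), ENNReal.ofReal (v y) ^ p') ^ (θ/p') ≤
        ENNReal.ofReal C *
          (ENNReal.ofReal ((1 - 2 ^ (-lam)) ^ (1/q) * 2 ^ (-((k:ℝ) * lam) / q)) *
            (∫⁻ y in dyad k, ENNReal.ofReal (v y) ^ p') ^ (1/p')) ^ θ := by
  have hp'pos : 0 < p' := by rw [hp']; exact div_pos (by linarith) (by linarith)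
  have hθpos : 0 < θ := by rw [hθ]; positivity
  have hexp : θ / q + θ / p' = 1 := by rw [hθ]; field_simp
  have ha : 0 < 1 - (2:ℝ) ^ (-lam) :=
    sub_pos.mpr (Real.rpow_lt_one_of_one_lt_of_neg one_lt_two (neg_neg_of_pos hlam))
  refine ⟨(2 ^ lam / (1 - 2 ^ (-lam))) ^ (θ / q), by positivity, ?_⟩
  intro v _ _ k l c z hc hc1 hcl hz
  have hmono := monotoneOn_Icc_of_lt_succ hc
  have h2k : (0:ℝ) < 2 ^ (k - 1) := zpow_pos two_pos _
  have hzI : ∀ n ∈ Finset.Icc 1 l, z n ∈ Set.Icc (c n) (c (n + 1)) := fun n hn =>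
    Set.Ioo_subset_Icc_self (hz n (Finset.mem_Icc.mp hn).1 (Finset.mem_Icc.mp hn).2)
  have hA : ∑ n ∈ Finset.Icc 1 l, ENNReal.ofReal (z n ^ (-lam) - c (n + 1) ^ (-lam)) ≤
      ENNReal.ofReal (((2:ℝ) ^ (k - 1)) ^ (-lam)) :=
    (sum_ofReal_rpow_neg_sub_le hmono (h2k.trans hc1) hlam.le hzI).trans <|
      ENNReal.ofReal_le_ofReal <| Real.rpow_le_rpow_of_nonpos h2k hc1.le (neg_nonpos.mpr hlam.le)
  have hB : ∑ n ∈ Finset.Icc 1 l, ∫⁻ y in Ioo (c n) (z n), ENNReal.ofReal (v y) ^ p' ≤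
      ∫⁻ y in dyad k, ENNReal.ofReal (v y) ^ p' :=
    (sum_lintegral_Ioo_le hmono _ fun n hn => (hzI n hn).2).trans <|
      lintegral_mono_set (Set.Ioo_subset_Icc_self.trans (Set.Icc_subset_Icc hc1.le hcl.le))
  calc _ ≤ (∑ n ∈ Finset.Icc 1 l, ENNReal.ofReal (z n ^ (-lam) - c (n + 1) ^ (-lam))) ^ (θ / q) *
          (∑ n ∈ Finset.Icc 1 l, ∫⁻ y in Ioo (c n) (z n), ENNReal.ofReal (v y) ^ p') ^ (θ / p') :=
        ENNReal.sum_rpow_mul_rpow_le _ _ _ (by positivity) (by positivity) hexp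
    _ ≤ ENNReal.ofReal (((2:ℝ) ^ (k - 1)) ^ (-lam)) ^ (θ / q) *
          (∫⁻ y in dyad k, ENNReal.ofReal (v y) ^ p') ^ (θ / p') := by gcongr
    _ = _ := by
        rw [zpow_sub_one_rpow_neg_eq k hlam, sigmaK_one_coeff_eq hlam,
          ENNReal.ofReal_mul_rpow_mul_rpow (by positivity) (by positivity) hq hθpos.le]

end
end
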